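/- Let X be an n×p matrix, Yc, YL, YR ∈ ℝⁿ, and let 𝟙 ∈ ℝⁿ be the all-ones vector. Define S(β,θ,δ,λ,μ) = ‖Yc − Xβ‖² + ‖YL − Xβθ − 𝟙λ‖² + ‖YR − Xβδ − 𝟙μ‖². If XᵀX is invertible and (β,θ,δ,λ,μ) is a stationary point of S, then β = (1+θ²+δ²)⁻¹ (XᵀX)⁻¹ [ XᵀYc + θXᵀ(YL − 𝟙λ) + δXᵀ(YR − 𝟙μ) ]. -/

import Mathlib

/-!
The gradient of `b ↦ ‖y - A b‖²` is `-2 Aᵀ (y - A b)`. Summing the three residuals, with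
`A = X, θ X, δ X`, the condition `∂S/∂β = 0` is the normal equation
`(1 + θ² + δ²) XᵀX β = XᵀYc + θ Xᵀ(YL - 𝟙λ) + δ Xᵀ(YR - 𝟙μ)`,
which is solved for `β` by inverting `XᵀX`.
-/

open Matrix

section DotProductCLM

variable {ι : Type*} [Fintype ι]

noncomputable def dotProductCLM (g : ι → ℝ) : (ι → ℝ) →L[ℝ] ℝ :=
  LinearMap.toContinuousLinearMap (dotProductBilin ℝ ℝ g)

@[simp] lemma dotProductCLM_apply (g v : ι → ℝ) : dotProductCLM g v = g ⬝ᵥ v := rfl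

lemma dotProductCLM_add (g h : ι → ℝ) :
    dotProductCLM (g + h) = dotProductCLM g + dotProductCLM h := by
  ext v
  simp [add_dotProduct]

lemma dotProductCLM_eq_zero_iff {g : ι → ℝ} : dotProductCLM g = 0 ↔ g = 0 :=
  ⟨fun h => dotProduct_eq_zero g fun v => by simpa using congr($h v), by rintro rfl; ext; simp⟩

end DotProductCLM

section LeastSquares

variable {m ι : Type*} [Fintype m] [Fintype ι]

lemma hasFDerivAt_residual_dotProduct_self (A : Matrix m ι ℝ) (y : m → ℝ) (b : ι → ℝ) :
    HasFDerivAt (fun b => (y - A *ᵥ b) ⬝ᵥ (y - A *ᵥ b))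
      (dotProductCLM ((-2 : ℝ) • Aᵀ *ᵥ (y - A *ᵥ b))) b := by
  have hres : HasFDerivAt (fun b => y - A *ᵥ b) (-LinearMap.toContinuousLinearMap A.mulVecLin) b :=
    (LinearMap.toContinuousLinearMap A.mulVecLin).hasFDerivAt.const_sub y
  refine ((dotProductBilin ℝ ℝ).toContinuousBilinearMap.hasFDerivAt_of_bilinear hres
    hres).congr_fderiv ?_
  ext v
  change (y - A *ᵥ b) ⬝ᵥ -(A *ᵥ v) + -(A *ᵥ v) ⬝ᵥ (y - A *ᵥ b) =
    ((-2 : ℝ) • Aᵀ *ᵥ (y - A *ᵥ b)) ⬝ᵥ v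
  rw [dotProduct_comm _ (y - A *ᵥ b), dotProduct_neg, dotProduct_mulVec, mulVec_transpose,
    smul_dotProduct]
  ring

lemma hasFDerivAt_smul_residual_dotProduct_self (A : Matrix m ι ℝ) (y w : m → ℝ) (c : ℝ)
    (b : ι → ℝ) :
    HasFDerivAt (fun b => (y - c • A *ᵥ b - w) ⬝ᵥ (y - c • A *ᵥ b - w))
      (dotProductCLM (((-2 : ℝ) * c) • Aᵀ *ᵥ (y - c • A *ᵥ b - w))) b := by
  have hres : ∀ b, y - c • A *ᵥ b - w = (y - w) - (c • A) *ᵥ b := fun b => by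
    rw [smul_mulVec, sub_right_comm]
  simp_rw [hres]
  convert hasFDerivAt_residual_dotProduct_self (c • A) (y - w) b using 2
  rw [transpose_smul, smul_mulVec c Aᵀ, smul_smul]

end LeastSquares

lemma eq_inv_smul_inv_mulVec_of_smul_mulVec_eq {K ι : Type*} [Field K] [Fintype ι] [DecidableEq ι]
    {A : Matrix ι ι K} (hA : IsUnit A) {c : K} (hc : c ≠ 0) {x y : ι → K}
    (h : c • A *ᵥ x = y) : x = c⁻¹ • A⁻¹ *ᵥ y := by
  rw [← h, mulVec_smul, mulVec_mulVec, nonsing_inv_mul A ((isUnit_iff_isUnit_det A).mp hA),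
    one_mulVec, smul_smul, inv_mul_cancel₀ hc, one_smul]

theorem stmt2_general {n p : ℕ} (X : Matrix (Fin n) (Fin p) ℝ) (Yc YL YR : Fin n → ℝ)
    (S : (Fin p → ℝ) → ℝ → ℝ → ℝ → ℝ → ℝ)
    (hS : ∀ β θ δ lam μ, S β θ δ lam μ =
      (Yc - X.mulVec β) ⬝ᵥ (Yc - X.mulVec β) +
      (YL - θ • X.mulVec β - lam • (1 : Fin n → ℝ)) ⬝ᵥ (YL - θ • X.mulVec β - lam • (1 : Fin n → ℝ)) +
      (YR - δ • X.mulVec β - μ • (1 : Fin n → ℝ)) ⬝ᵥ (YR - δ • X.mulVec β - μ • (1 : Fin n → ℝ)))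
    (hinv : IsUnit (Xᵀ * X))
    (β : Fin p → ℝ) (θ δ lam μ : ℝ)
    (hβ : fderiv ℝ (fun b => S b θ δ lam μ) β = 0) :
    β = (1 + θ ^ 2 + δ ^ 2)⁻¹ •
      (Xᵀ * X)⁻¹.mulVec
        (Xᵀ.mulVec Yc + θ • Xᵀ.mulVec (YL - lam • (1 : Fin n → ℝ)) +
          δ • Xᵀ.mulVec (YR - μ • (1 : Fin n → ℝ))) := by
  set rL := YL - θ • X *ᵥ β - lam • (1 : Fin n → ℝ) with hrL
  set rR := YR - δ • X *ᵥ β - μ • (1 : Fin n → ℝ) with hrR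
  have hgrad : HasFDerivAt (fun b => S b θ δ lam μ)
      (dotProductCLM ((-2 : ℝ) • Xᵀ *ᵥ (Yc - X *ᵥ β)) +
        dotProductCLM (((-2 : ℝ) * θ) • Xᵀ *ᵥ rL) +
        dotProductCLM (((-2 : ℝ) * δ) • Xᵀ *ᵥ rR)) β := by
    simp_rw [hS]
    exact ((hasFDerivAt_residual_dotProduct_self X Yc β).add
      (hasFDerivAt_smul_residual_dotProduct_self X YL _ θ β)).add
      (hasFDerivAt_smul_residual_dotProduct_self X YR _ δ β)
  have hnormal : Xᵀ *ᵥ (Yc - X *ᵥ β) + θ • Xᵀ *ᵥ rL + δ • Xᵀ *ᵥ rR = 0 := by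
    rw [hgrad.fderiv, ← dotProductCLM_add, ← dotProductCLM_add, dotProductCLM_eq_zero_iff] at hβ
    have h : (-2 : ℝ) • (Xᵀ *ᵥ (Yc - X *ᵥ β) + θ • Xᵀ *ᵥ rL + δ • Xᵀ *ᵥ rR) = 0 := by
      rw [← hβ]; module
    exact (smul_eq_zero.mp h).resolve_left (by norm_num)
  refine eq_inv_smul_inv_mulVec_of_smul_mulVec_eq hinv (by positivity) ?_
  simp only [hrL, hrR, mulVec_sub, mulVec_smul, ← mulVec_mulVec] at hnormal ⊢
  linear_combination (norm := module) -hnormal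

theorem stmt2 {n p : ℕ} (X : Matrix (Fin n) (Fin p) ℝ) (Yc YL YR : Fin n → ℝ)
    (S : (Fin p → ℝ) → ℝ → ℝ → ℝ → ℝ → ℝ)
    (hS : ∀ β θ δ lam μ, S β θ δ lam μ =
      (Yc - X.mulVec β) ⬝ᵥ (Yc - X.mulVec β) +
      (YL - θ • X.mulVec β - lam • (1 : Fin n → ℝ)) ⬝ᵥ (YL - θ • X.mulVec β - lam • (1 : Fin n → ℝ)) +
      (YR - δ • X.mulVec β - μ • (1 : Fin n → ℝ)) ⬝ᵥ (YR - δ • X.mulVec β - μ • (1 : Fin n → ℝ)))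
    (hinv : IsUnit (Xᵀ * X))
    (β : Fin p → ℝ) (θ δ lam μ : ℝ)
    (hβ : fderiv ℝ (fun b => S b θ δ lam μ) β = 0)
    (hθ : deriv (fun t => S β t δ lam μ) θ = 0)
    (hδ : deriv (fun t => S β θ t lam μ) δ = 0)
    (hlam : deriv (fun t => S β θ δ t μ) lam = 0)
    (hμ : deriv (fun t => S β θ δ lam t) μ = 0) :
    β = (1 + θ ^ 2 + δ ^ 2)⁻¹ •
      (Xᵀ * X)⁻¹.mulVec
        (Xᵀ.mulVec Yc + θ • Xᵀ.mulVec (YL - lam • (1 : Fin n → ℝ)) +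
          δ • Xᵀ.mulVec (YR - μ • (1 : Fin n → ℝ))) :=
  stmt2_general X Yc YL YR S hS hinv β θ δ lam μ hβ
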